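/- arXiv:1312.7154 — 4 statements merged into one kernel-verified Lean document; each statement's English description precedes it below -/
import Mathlib

section
/- For every real number t there exist uncountably many Liouville numbers ξ such that t − ξ is also a Liouville number; in particular, every real number is a sum of two Liouville numbers. -/
/-!
The Liouville numbers form a comeagre subset of `ℝ`, and so does their image under the
homeomorphism `ξ ↦ t - ξ`. Hence the set of `ξ` with `ξ` and `t - ξ` both Liouville is comeagre;
by the Baire category theorem it is then nonempty, and not countable, since countable subsets of
`ℝ` are meagre.
-/

open Set Filter Topology

/-- A point that is not isolated has a dense open complement, so countable sets are meagre. -/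
theorem Set.Countable.isMeagre {X : Type*} [TopologicalSpace X] [T1Space X]
    [∀ x : X, (𝓝[≠] x).NeBot] {s : Set X} (hs : s.Countable) : IsMeagre s := by
  have : (⋂ x ∈ s, ({x}ᶜ : Set X)) ∈ residual X :=
    (countable_bInter_mem hs).mpr fun x _ =>
      residual_of_dense_open isOpen_compl_singleton (dense_compl_singleton x)
  rwa [← compl_iUnion₂, biUnion_of_singleton] at this

theorem not_countable_of_mem_residual {X : Type*} [TopologicalSpace X] [BaireSpace X]
    [Nonempty X] [T1Space X] [∀ x : X, (𝓝[≠] x).NeBot] {s : Set X} (hs : s ∈ residual X) :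
    ¬ s.Countable :=
  fun hc => not_isMeagre_of_mem_residual hs hc.isMeagre

theorem eventually_residual_liouville_sub (t : ℝ) : ∀ᶠ ξ in residual ℝ, Liouville (t - ξ) :=
  (tendsto_residual_of_isOpenMap (continuous_sub_left t) (Homeomorph.subLeft t).isOpenMap)
    eventually_residual_liouville

/-- Erdős: for every real number `t`, there are uncountably many Liouville
numbers `ξ` such that `t - ξ` is also a Liouville number; in particular every
real number is a sum of two Liouville numbers. -/
theorem erdos_sum_of_two_liouville (t : ℝ) :
    ¬ {ξ : ℝ | Liouville ξ ∧ Liouville (t - ξ)}.Countable ∧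
      ∃ ξ η : ℝ, Liouville ξ ∧ Liouville η ∧ t = ξ + η := by
  have hS : ∀ᶠ ξ in residual ℝ, Liouville ξ ∧ Liouville (t - ξ) :=
    eventually_residual_liouville.and (eventually_residual_liouville_sub t)
  obtain ⟨ξ, hξ, htξ⟩ := (dense_of_mem_residual hS).nonempty
  exact ⟨not_countable_of_mem_residual hS, ξ, t - ξ, hξ, htξ, (add_sub_cancel ξ t).symm⟩
end

section
/- An irrational real number t is transcendental over ℚ if and only if there exist two Liouville numbers ξ and η that are algebraically independent over ℚ and satisfy t = ξ + η. -/
/-!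
If `t` is transcendental, the numbers `ξ` algebraic over `ℚ[t]` form a countable set, while `ξ`
and `t - ξ` are both Liouville for a residual set of `ξ`; by Baire some `ξ` has both properties.
Then `t, ξ` are algebraically independent, and hence so are `ξ, t - ξ`, since translating the
second entry of a pair by the first preserves algebraic independence. The same translation
invariance gives the converse: if `ξ, η` are algebraically independent, so are `ξ, ξ + η`, and
in particular `ξ + η` is transcendental.
-/

open Algebra Filter Polynomial Topology

instance Polynomial.countable {R : Type*} [Semiring R] [Countable R] : Countable R[X] :=
  (AddMonoidAlgebra.coeff_injective.comp Polynomial.toFinsupp_injective).countable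

section Transcendence

variable {R A : Type*} [CommRing R] [CommRing A] [Algebra R A]

theorem isAlgebraic_add_algebraMap_iff [IsDomain R] {x : A} (r : R) :
    IsAlgebraic R (x + algebraMap R A r) ↔ IsAlgebraic R x :=
  ⟨fun h ↦ by simpa using h.sub (isAlgebraic_algebraMap r),
    fun h ↦ h.add (isAlgebraic_algebraMap r)⟩

theorem algebraicIndependent_pair_iff {x y : A} :
    AlgebraicIndependent R ![x, y] ↔ Transcendental R x ∧ Transcendental (adjoin R {x}) y := by
  have : Subsingleton {j : Fin 2 // j ≠ 1} :=
    ⟨fun ⟨a, ha⟩ ⟨b, hb⟩ ↦ Subtype.ext (by grind)⟩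
  rw [AlgebraicIndependent.iff_transcendental_adjoin_image 1,
    algebraicIndependent_singleton_iff (⟨0, by decide⟩ : {j : Fin 2 // j ≠ 1})]
  have : ({1}ᶜ : Set (Fin 2)) = {0} := by ext i; fin_cases i <;> simp
  rw [this, Set.image_singleton]
  exact Iff.rfl

theorem algebraicIndependent_pair_comm {x y : A} :
    AlgebraicIndependent R ![x, y] ↔ AlgebraicIndependent R ![y, x] := by
  rw [← algebraicIndependent_equiv (Equiv.swap 0 1)]
  congr!
  ext i; fin_cases i <;> rfl

theorem algebraicIndependent_pair_add_iff [IsDomain A] {x y : A} :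
    AlgebraicIndependent R ![x, y + x] ↔ AlgebraicIndependent R ![x, y] := by
  simp only [algebraicIndependent_pair_iff, Transcendental]
  exact and_congr_right' <| not_congr <|
    isAlgebraic_add_algebraMap_iff (⟨x, self_mem_adjoin_singleton R x⟩ : adjoin R {x})

theorem AlgebraicIndependent.transcendental_add [IsDomain A] {x y : A}
    (h : AlgebraicIndependent R ![x, y]) : Transcendental R (x + y) :=
  add_comm y x ▸ (algebraicIndependent_pair_add_iff.mpr h).transcendental 1

end Transcendence

theorem countable_setOf_isAlgebraic_adjoin_singleton {K A : Type*} [Field K] [Countable K]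
    [Field A] [Algebra K A] (t : A) : {x : A | IsAlgebraic (adjoin K {t}) x}.Countable := by
  have : Countable (adjoin K {t}) := by
    rw [adjoin_singleton_eq_range_aeval]
    exact (Set.countable_range _).to_subtype
  exact Algebraic.countable _ _

theorem exists_liouville_sub_liouville_notMem (t : ℝ) {s : Set ℝ} (hs : s.Countable) :
    ∃ x ∉ s, Liouville x ∧ Liouville (t - x) := by
  have hsub : ∀ᶠ x in residual ℝ, Liouville (t - x) :=
    (tendsto_residual_of_isOpenMap (by fun_prop) (Homeomorph.subLeft t).isOpenMap).eventually
      eventually_residual_liouville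
  have hs' : sᶜ ∈ residual ℝ := residual_of_dense_Gδ hs.isGδ_compl (hs.dense_compl ℝ)
  exact (dense_of_mem_residual (inter_mem hs' (eventually_residual_liouville.and hsub))).nonempty

theorem transcendental_iff_sum_of_alg_indep_liouville_general (t : ℝ) :
    Transcendental ℚ t ↔
      ∃ ξ η : ℝ, Liouville ξ ∧ Liouville η ∧
        AlgebraicIndependent ℚ ![ξ, η] ∧ t = ξ + η := by
  constructor
  · intro ht
    obtain ⟨ξ, hξt, hξ, hη⟩ := exists_liouville_sub_liouville_notMem t
      (countable_setOf_isAlgebraic_adjoin_singleton (K := ℚ) t)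
    refine ⟨ξ, t - ξ, hξ, hη, ?_, by ring⟩
    rw [← algebraicIndependent_pair_add_iff, sub_add_cancel, algebraicIndependent_pair_comm]
    exact algebraicIndependent_pair_iff.mpr ⟨ht, hξt⟩
  · rintro ⟨ξ, η, -, -, hind, rfl⟩
    exact hind.transcendental_add

/-- Burger: an irrational real number `t` is transcendental over `ℚ` if and
only if there exist two `ℚ`-algebraically independent Liouville numbers `ξ`
and `η` with `t = ξ + η`. -/
theorem transcendental_iff_sum_of_alg_indep_liouville (t : ℝ)
    (ht : Irrational t) :
    Transcendental ℚ t ↔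
      ∃ ξ η : ℝ, Liouville ξ ∧ Liouville η ∧
        AlgebraicIndependent ℚ ![ξ, η] ∧ t = ξ + η :=
  transcendental_iff_sum_of_alg_indep_liouville_general t
end

section
/- Let I be an interval of ℝ with nonempty interior and let φ : I → I be a continuous bijective map with inverse ψ. Then the set of ξ ∈ I such that φ^n(ξ) is a Liouville number for every n ∈ ℤ (where φ^0 is the identity, φ^n is the n-fold iterate of φ for n ≥ 1, and φ^{−n} is the n-fold iterate of ψ for n ≥ 1) is a G_δ-subset of I, and hence is uncountable. -/
/-- A `G_δ`-subset of a topological space: a countable intersection of dense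
open subsets. -/
def IsGdeltaDense {X : Type*} [TopologicalSpace X] (s : Set X) : Prop :=
  ∃ T : Set (Set X), T.Countable ∧ (∀ t ∈ T, IsOpen t ∧ Dense t) ∧ s = ⋂₀ T

/-- The `ℤ`-indexed iterates of a bijection `φ` with inverse `ψ`: `φ^[n]` for
`n ≥ 0` and `ψ^[n]` for `n < 0`. -/
def zIter {α : Type*} (φ ψ : α → α) : ℤ → α → α
  | Int.ofNat n => φ^[n]
  | Int.negSucc n => ψ^[n + 1]

/-!
A continuous bijection of an interval is strictly monotone, so its inverse is continuous and all
the iterates `φ^n`, `n ∈ ℤ`, are homeomorphisms of `I`. The Liouville numbers form a dense `G_δ`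
in `ℝ`; since `I` lies in the closure of its interior, their trace on `I` is a dense `G_δ` of `I`,
and so are its preimages under the `φ^n` and the intersection of these countably many sets.
Finally `I` is locally compact, hence a Baire space, and has no isolated points, so a dense `G_δ`
of `I` is uncountable.
-/

open Set Filter Topology

section GdeltaDense

variable {X Y : Type*} [TopologicalSpace X] [TopologicalSpace Y]

theorem IsGδ.isGdeltaDense {s : Set X} (hs : IsGδ s) (hd : Dense s) : IsGdeltaDense s := by
  obtain ⟨T, hTo, hTc, rfl⟩ := hs
  exact ⟨T, hTc, fun t ht => ⟨hTo t ht, hd.mono (sInter_subset_of_mem ht)⟩, rfl⟩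

theorem IsGdeltaDense.preimage {f : X → Y} (hf : Continuous f)
    (hdense : ∀ t, IsOpen t → Dense t → Dense (f ⁻¹' t)) {s : Set Y} (hs : IsGdeltaDense s) :
    IsGdeltaDense (f ⁻¹' s) := by
  obtain ⟨T, hTc, hT, rfl⟩ := hs
  refine ⟨(f ⁻¹' ·) '' T, hTc.image _, ?_, by rw [preimage_sInter, sInter_image]⟩
  rintro _ ⟨t, ht, rfl⟩
  exact ⟨(hT t ht).1.preimage hf, hdense t (hT t ht).1 (hT t ht).2⟩

theorem IsGdeltaDense.preimage_homeomorph (H : X ≃ₜ Y) {s : Set Y} (hs : IsGdeltaDense s) :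
    IsGdeltaDense (H ⁻¹' s) :=
  hs.preimage H.continuous fun _ _ ht => ht.preimage H.isOpenMap

theorem Dense.preimage_val_of_subset_closure_interior {s t : Set X}
    (hs : s ⊆ closure (interior s)) (ht : Dense t) : Dense ((↑) ⁻¹' t : Set s) := by
  rw [Subtype.dense_iff, image_preimage_eq_inter_range, Subtype.range_coe]
  calc s ⊆ closure (interior s) := hs
    _ ⊆ closure (interior s ∩ t) :=
      closure_minimal (ht.open_subset_closure_inter isOpen_interior) isClosed_closure
    _ ⊆ closure (t ∩ s) := closure_mono fun x hx => ⟨hx.2, interior_subset hx.1⟩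

theorem IsGdeltaDense.preimage_val {s : Set X} (hs : s ⊆ closure (interior s)) {t : Set X}
    (ht : IsGdeltaDense t) : IsGdeltaDense ((↑) ⁻¹' t : Set s) :=
  ht.preimage continuous_subtype_val fun _ _ hu => hu.preimage_val_of_subset_closure_interior hs

theorem IsGdeltaDense.iInter {ι : Sort*} [Countable ι] {s : ι → Set X}
    (hs : ∀ i, IsGdeltaDense (s i)) : IsGdeltaDense (⋂ i, s i) := by
  choose T hTc hT hsT using hs
  refine ⟨⋃ i, T i, countable_iUnion hTc, fun t ht => ?_, ?_⟩
  · obtain ⟨i, hi⟩ := mem_iUnion.mp ht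
    exact hT i t hi
  · rw [sInter_iUnion]
    exact iInter_congr hsT

theorem IsGdeltaDense.not_countable [T1Space X] [BaireSpace X] [PerfectSpace X] [Nonempty X]
    {s : Set X} (hs : IsGdeltaDense s) : ¬ s.Countable := by
  intro hsc
  obtain ⟨T, hTc, hT, rfl⟩ := hs
  -- Removing the countably many points of `⋂₀ T` as well leaves a dense, yet empty, intersection.
  set U := T ∪ (fun x => {x}ᶜ) '' ⋂₀ T
  have hU : Dense (⋂₀ U) := by
    refine dense_sInter_of_isOpen ?_ (hTc.union (hsc.image _)) ?_
    · rintro _ (ht | ⟨x, -, rfl⟩)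
      exacts [(hT _ ht).1, isOpen_compl_singleton]
    · rintro _ (ht | ⟨x, -, rfl⟩)
      exacts [(hT _ ht).2, dense_compl_singleton x]
  obtain ⟨y, hy⟩ := hU.nonempty
  have hyT : y ∈ ⋂₀ T := fun t ht => hy t (Or.inl ht)
  exact hy {y}ᶜ (Or.inr ⟨y, hyT, rfl⟩) rfl

end GdeltaDense

theorem isGdeltaDense_setOf_liouville : IsGdeltaDense {x : ℝ | Liouville x} :=
  IsGδ.setOfPred_liouville.isGdeltaDense dense_liouville

theorem Homeomorph.coe_pow {X : Type*} [TopologicalSpace X] (H : X ≃ₜ X) (n : ℕ) :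
    ⇑(H ^ n) = H^[n] :=
  hom_coe_pow _ rfl (fun _ _ => rfl) H n

theorem zIter_eq_coe_zpow {X : Type*} [TopologicalSpace X] (H : X ≃ₜ X) (n : ℤ) :
    zIter H H.symm n = ⇑(H ^ n) := by
  cases n with
  | ofNat n => exact (H.coe_pow n).symm
  | negSucc n => rw [zpow_negSucc, ← inv_pow]; exact (H⁻¹.coe_pow (n + 1)).symm

theorem Equiv.continuous_symm_of_continuous {α β : Type*} [ConditionallyCompleteLinearOrder α]
    [TopologicalSpace α] [OrderTopology α] [DenselyOrdered α] [LinearOrder β]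
    [TopologicalSpace β] [OrderTopology β] (e : α ≃ β) (he : Continuous e) :
    Continuous e.symm := by
  rcases he.strictMono_of_inj e.injective with h | h
  · refine Monotone.continuous_of_surjective (fun x y hxy => ?_) e.symm.surjective
    exact h.le_iff_le.mp (by simpa using hxy)
  · refine Monotone.continuous_of_surjective (β := αᵒᵈ) (fun x y hxy => ?_) e.symm.surjective
    exact h.le_iff_ge.mp (by simpa using hxy)

theorem exists_Ici_mem_nhds {α : Type*} [LinearOrder α] [TopologicalSpace α]
    [ClosedIicTopology α] (x : α) : ∃ a, Ici a ∈ 𝓝 x := by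
  by_cases h : ∃ a, a < x
  · obtain ⟨a, ha⟩ := h
    exact ⟨a, Ici_mem_nhds ha⟩
  · push Not at h
    exact ⟨x, mem_of_superset univ_mem fun y _ => h y⟩

theorem weaklyLocallyCompactSpace_of_compactIccSpace {α : Type*} [LinearOrder α]
    [TopologicalSpace α] [OrderClosedTopology α] [CompactIccSpace α] :
    WeaklyLocallyCompactSpace α where
  exists_compact_mem_nhds x := by
    obtain ⟨a, ha⟩ := exists_Ici_mem_nhds x
    obtain ⟨b, hb⟩ := exists_Ici_mem_nhds (OrderDual.toDual x)
    exact ⟨Icc a b, isCompact_Icc, Ici_inter_Iic (a := a) (b := b) ▸ inter_mem ha hb⟩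

theorem Set.OrdConnected.subset_closure_interior {𝕜 : Type*} [Field 𝕜] [LinearOrder 𝕜]
    [IsStrictOrderedRing 𝕜] [TopologicalSpace 𝕜] [OrderTopology 𝕜] {s : Set 𝕜}
    (hs : s.OrdConnected) (hint : (interior s).Nonempty) : s ⊆ closure (interior s) := by
  rw [(convex_iff_ordConnected.mpr hs).closure_interior_eq_closure_of_nonempty_interior hint]
  exact subset_closure

theorem orbit_liouville_gdelta_general (I : Set ℝ) (hI : I.OrdConnected)
    (hint : (interior I).Nonempty)
    (φ : I → I) (hφc : Continuous φ)
    (ψ : I → I) (hψl : Function.LeftInverse ψ φ)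
    (hψr : Function.RightInverse ψ φ) :
    IsGdeltaDense {ξ : I | ∀ n : ℤ, Liouville ((zIter φ ψ n ξ : I) : ℝ)} ∧
      ¬ {ξ : I | ∀ n : ℤ, Liouville ((zIter φ ψ n ξ : I) : ℝ)}.Countable := by
  obtain ⟨a, ha⟩ := hint
  have haI : I ∈ 𝓝 a := mem_interior_iff_mem_nhds.mp ha
  -- Mathlib's conditionally complete order on `I` requires `Inhabited I`.
  have : Inhabited I := ⟨⟨a, mem_of_mem_nhds haI⟩⟩
  let e : I ≃ I := ⟨φ, ψ, hψl, hψr⟩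
  let H : I ≃ₜ I := ⟨e, hφc, e.continuous_symm_of_continuous hφc⟩
  have hL : IsGdeltaDense ((↑) ⁻¹' {x : ℝ | Liouville x} : Set I) :=
    isGdeltaDense_setOf_liouville.preimage_val (hI.subset_closure_interior ⟨a, ha⟩)
  have hS : IsGdeltaDense {ξ : I | ∀ n : ℤ, Liouville ((zIter H H.symm n ξ : I) : ℝ)} := by
    simp only [zIter_eq_coe_zpow, ofPred_forall]
    exact IsGdeltaDense.iInter fun n => hL.preimage_homeomorph (H ^ n)
  -- Instances for `not_countable`: `I` is Baire being locally compact, and perfect being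
  -- connected and nontrivial.
  have := weaklyLocallyCompactSpace_of_compactIccSpace (α := I)
  have : ConnectedSpace I := Subtype.connectedSpace ⟨⟨a, mem_of_mem_nhds haI⟩, hI.isPreconnected⟩
  have : Nontrivial I := nontrivial_coe_sort.mpr (infinite_of_mem_nhds a haI).nontrivial
  exact ⟨hS, hS.not_countable⟩

/-- Let `I` be an interval of `ℝ` with nonempty interior and `φ : I → I` a
continuous bijection with inverse `ψ`. Then the set of `ξ ∈ I` whose whole
orbit `{φ^n ξ : n ∈ ℤ}` consists of Liouville numbers is a `G_δ`-subset of
`I`, hence uncountable. -/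
theorem orbit_liouville_gdelta (I : Set ℝ) (hI : I.OrdConnected)
    (hint : (interior I).Nonempty)
    (φ : I → I) (hφc : Continuous φ) (hφb : Function.Bijective φ)
    (ψ : I → I) (hψl : Function.LeftInverse ψ φ)
    (hψr : Function.RightInverse ψ φ) :
    IsGdeltaDense {ξ : I | ∀ n : ℤ, Liouville ((zIter φ ψ n ξ : I) : ℝ)} ∧
      ¬ {ξ : I | ∀ n : ℤ, Liouville ((zIter φ ψ n ξ : I) : ℝ)}.Countable :=
  orbit_liouville_gdelta_general I hI hint φ hφc ψ hψl hψr
end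

section
/- Let f_1, …, f_m be polynomials in ℂ[z]. The following are equivalent: (i) for every nonzero tuple (a_1, …, a_m) ∈ ℤ^m, the polynomial a_1 f_1 + ⋯ + a_m f_m is not constant; (ii) the entire functions e^{f_1}, …, e^{f_m} are algebraically independent over ℂ(z), i.e., for every nonzero polynomial P ∈ ℂ[z][X_1, …, X_m] in m variables with coefficients in ℂ[z], the function z ↦ P(z; exp(f_1(z)), …, exp(f_m(z))) is not identically zero on ℂ. -/
/-!
Write `P(z; e^{f_1}, …, e^{f_m}) = ∑_d P_d(z) e^{⟨d, f⟩(z)}`, the sum running over the support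
of `P`. Condition (i) says exactly that the exponents `⟨d, f⟩` have pairwise nonconstant
differences, and polynomial multiples of such exponentials are linearly independent: from a
vanishing relation and its derivative one eliminates the term of one index, inducts on the
number of terms, and a degree comparison shows that the elimination kills no other coefficient.
Conversely, if `⟨a, f⟩ = c` with `a ≠ 0`, then `X^{a⁺} - e^c X^{a⁻}` is a nonzero relation.
-/

open Polynomial

/-- `wronskian q p + q p h' = q² e^{-h} (p e^h / q)'`, so this says that `p e^h / q` is not
constant when `h` is not. -/
theorem Polynomial.wronskian_add_mul_mul_derivative_ne_zero {R : Type*} [CommRing R] [IsDomain R]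
    {p q h : R[X]} (hp : p ≠ 0) (hq : q ≠ 0) (hh : derivative h ≠ 0) :
    wronskian q p + q * p * derivative h ≠ 0 := by
  intro hsum
  have hlt : (q * p * derivative h).degree < q.degree + p.degree := by
    rw [eq_neg_of_add_eq_zero_right hsum, degree_neg]
    exact degree_wronskian_lt_add hq hp
  rw [degree_mul, degree_mul] at hlt
  exact hlt.not_ge (le_add_of_nonneg_right (zero_le_degree_iff.mpr hh))

section ExpPolySum

variable {ι : Type*}

noncomputable def expPolySum (s : Finset ι) (c g : ι → ℂ[X]) (z : ℂ) : ℂ :=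
  ∑ i ∈ s, (c i).eval z * Complex.exp ((g i).eval z)

theorem hasDerivAt_expPolySum (s : Finset ι) (c g : ι → ℂ[X]) (z : ℂ) :
    HasDerivAt (expPolySum s c g)
      (expPolySum s (fun i => derivative (c i) + c i * derivative (g i)) g z) z := by
  unfold expPolySum
  refine HasDerivAt.fun_sum fun i _ => ?_
  refine (((c i).hasDerivAt z).fun_mul ((g i).hasDerivAt z).cexp).congr_deriv ?_
  simp only [eval_add, eval_mul]
  ring

theorem expPolySum_derivative_coeffs_eq_zero {s : Finset ι} {c g : ι → ℂ[X]}
    (h : expPolySum s c g = 0) :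
    expPolySum s (fun i => derivative (c i) + c i * derivative (g i)) g = 0 := by
  funext z
  have hderiv := hasDerivAt_expPolySum s c g z
  rw [h] at hderiv
  exact hderiv.unique (hasDerivAt_const z 0)

theorem mul_expPolySum_sub_mul_expPolySum_insert [DecidableEq ι] {a : ι} {t : Finset ι}
    (ha : a ∉ t) (c g : ι → ℂ[X]) (z : ℂ) :
    (c a).eval z * expPolySum (insert a t)
        (fun i => derivative (c i) + c i * derivative (g i)) g z -
      (derivative (c a) + c a * derivative (g a)).eval z * expPolySum (insert a t) c g z =
    expPolySum t (fun i => wronskian (c a) (c i) + c a * c i * derivative (g i - g a)) g z := by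
  simp only [expPolySum, Finset.sum_insert ha, mul_add, Finset.mul_sum, add_sub_add_comm,
    ← Finset.sum_sub_distrib]
  rw [show ∀ x y u v : ℂ, x * (y * u) - y * (x * u) + v = v by intros; ring]
  refine Finset.sum_congr rfl fun i _ => ?_
  simp only [wronskian, derivative_sub, eval_add, eval_sub, eval_mul]
  ring

theorem eq_zero_of_expPolySum_eq_zero {s : Finset ι} {g : ι → ℂ[X]}
    (hg : (s : Set ι).Pairwise fun i j => derivative (g i - g j) ≠ 0) {c : ι → ℂ[X]}
    (h : expPolySum s c g = 0) : ∀ i ∈ s, c i = 0 := by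
  classical
  induction s using Finset.induction_on generalizing c with
  | empty => simp
  | @insert a t ha ih =>
    rw [Finset.coe_insert, Set.pairwise_insert] at hg
    have hd := ih hg.1
      (c := fun i => wronskian (c a) (c i) + c a * c i * derivative (g i - g a))
      (funext fun z => by
        rw [← mul_expPolySum_sub_mul_expPolySum_insert ha,
          expPolySum_derivative_coeffs_eq_zero h, h]
        simp only [Pi.zero_apply, mul_zero, sub_zero])
    have hca : c a = 0 := by
      by_contra hca
      have hct : ∀ i ∈ t, c i = 0 := fun i hi => by
        by_contra hci
        exact wronskian_add_mul_mul_derivative_ne_zero hci hca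
          (hg.2 i hi (ne_of_mem_of_not_mem hi ha).symm).2 (hd i hi)
      refine hca (zero_of_eval_zero _ fun z => ?_)
      have hz := congrFun h z
      simp only [expPolySum, Finset.sum_insert ha, Pi.zero_apply] at hz
      rw [Finset.sum_eq_zero fun i hi => by rw [hct i hi, eval_zero, zero_mul], add_zero] at hz
      exact (mul_eq_zero.mp hz).resolve_right (Complex.exp_ne_zero _)
    have ht := ih hg.1 (c := c) (funext fun z => by
      simpa [expPolySum, Finset.sum_insert ha, hca] using congrFun h z)
    intro i hi
    rcases Finset.mem_insert.mp hi with rfl | hi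
    · exact hca
    · exact ht i hi

end ExpPolySum

section IntComb

variable {σ : Type*} [Fintype σ]

noncomputable def intComb (f : σ → ℂ[X]) (a : σ → ℤ) : ℂ[X] :=
  ∑ i, C (a i : ℂ) * f i

theorem intComb_sub (f : σ → ℂ[X]) (a b : σ → ℤ) :
    intComb f (a - b) = intComb f a - intComb f b := by
  simp only [intComb, Pi.sub_apply, Int.cast_sub, C_sub, sub_mul, Finset.sum_sub_distrib]

theorem eval₂_monomial_exp (f : σ → ℂ[X]) (z : ℂ) (d : σ →₀ ℕ) (p : ℂ[X]) :
    MvPolynomial.eval₂ (evalRingHom z) (fun i => Complex.exp ((f i).eval z))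
        (MvPolynomial.monomial d p) =
      p.eval z * Complex.exp ((intComb f fun i => d i).eval z) := by
  rw [MvPolynomial.eval₂_monomial, Finsupp.prod_fintype _ _ fun i => pow_zero _,
    coe_evalRingHom]
  simp only [intComb, eval_finsetSum, eval_mul, eval_C, Int.cast_natCast, Complex.exp_sum,
    Complex.exp_nat_mul]

theorem eval₂_exp_eq_expPolySum (f : σ → ℂ[X]) (P : MvPolynomial σ ℂ[X]) (z : ℂ) :
    MvPolynomial.eval₂ (evalRingHom z) (fun i => Complex.exp ((f i).eval z)) P =
      expPolySum P.support P.coeff (fun d => intComb f fun i => d i) z := by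
  conv_lhs => rw [P.as_sum]
  simp only [MvPolynomial.eval₂_sum, eval₂_monomial_exp, expPolySum]

theorem exists_eval₂_exp_ne_zero {f : σ → ℂ[X]}
    (hf : ∀ a : σ → ℤ, a ≠ 0 → ∀ c : ℂ, intComb f a ≠ C c)
    {P : MvPolynomial σ ℂ[X]} (hP : P ≠ 0) :
    ∃ z : ℂ, MvPolynomial.eval₂ (evalRingHom z) (fun i => Complex.exp ((f i).eval z)) P ≠ 0 := by
  by_contra! hzero
  have hpair : (P.support : Set (σ →₀ ℕ)).Pairwise fun d e =>
      derivative ((intComb f fun i => d i) - intComb f fun i => e i) ≠ 0 := by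
    intro d _ e _ hde hder
    rw [← intComb_sub] at hder
    refine hf _ ?_ _ (eq_C_of_natDegree_eq_zero (derivative_eq_zero.mp hder))
    contrapose! hde
    ext i
    simpa [sub_eq_zero] using congrFun hde i
  obtain ⟨d, hd⟩ := MvPolynomial.support_nonempty.mpr hP
  refine MvPolynomial.mem_support_iff.mp hd (eq_zero_of_expPolySum_eq_zero hpair ?_ d hd)
  exact funext fun z => (eval₂_exp_eq_expPolySum f P z).symm.trans (hzero z)

theorem intComb_ne_C_of_exists_eval₂_exp_ne_zero {f : σ → ℂ[X]}
    (h : ∀ P : MvPolynomial σ ℂ[X], P ≠ 0 →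
      ∃ z : ℂ, MvPolynomial.eval₂ (evalRingHom z) (fun i => Complex.exp ((f i).eval z)) P ≠ 0)
    {a : σ → ℤ} (ha : a ≠ 0) (c : ℂ) : intComb f a ≠ C c := by
  intro hc
  set dpos : σ →₀ ℕ := Finsupp.equivFunOnFinite.symm fun i => (a i).toNat
  set dneg : σ →₀ ℕ := Finsupp.equivFunOnFinite.symm fun i => (-a i).toNat
  have hsub : ((fun i => (dpos i : ℤ)) - fun i => (dneg i : ℤ)) = a :=
    funext fun i => Int.toNat_sub_toNat_neg (a i)
  have hne : dpos ≠ dneg := fun heq => ha (by rw [← hsub, heq, sub_self])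
  obtain ⟨z, hz⟩ :=
    h (MvPolynomial.monomial dpos 1 - MvPolynomial.monomial dneg (C (Complex.exp c))) (by
      intro h0
      classical
      simpa [MvPolynomial.coeff_monomial, hne.symm] using congrArg (MvPolynomial.coeff dpos) h0)
  apply hz
  rw [MvPolynomial.eval₂_sub, eval₂_monomial_exp, eval₂_monomial_exp, eval_one, eval_C, one_mul,
    ← Complex.exp_add, sub_eq_zero]
  congr 1
  rw [← sub_eq_iff_eq_add, ← eval_sub, ← intComb_sub, hsub, hc, eval_C]

end IntComb

/-- Let `f 1, …, f m ∈ ℂ[z]`. No nontrivial integer combination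
`a 1 • f 1 + ⋯ + a m • f m` is constant if and only if the entire functions
`e^{f 1}, …, e^{f m}` are algebraically independent over `ℂ(z)`: for every
nonzero polynomial `P` in `m` variables with coefficients in `ℂ[z]`, the
function `z ↦ P(z; exp (f 1 (z)), …, exp (f m (z)))` is not identically
zero. -/
theorem exp_poly_algebraically_independent (m : ℕ) (f : Fin m → Polynomial ℂ) :
    (∀ a : Fin m → ℤ, a ≠ 0 → ∀ c : ℂ,
        ∑ i, Polynomial.C (a i : ℂ) * f i ≠ Polynomial.C c) ↔
      (∀ P : MvPolynomial (Fin m) (Polynomial ℂ), P ≠ 0 →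
        ∃ z : ℂ, MvPolynomial.eval₂ (Polynomial.evalRingHom z)
          (fun i => Complex.exp ((f i).eval z)) P ≠ 0) :=
  ⟨fun hf _ => exists_eval₂_exp_ne_zero hf, fun h _ => intComb_ne_C_of_exists_eval₂_exp_ne_zero h⟩
end
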